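/- arXiv:2012.09832 — 6 statements merged into one kernel-verified Lean document; each statement's English description precedes it below -/
import Mathlib

section
/- For every prime number p with p ≡ 3 (mod 4), the quadratic form w² + x² + p·y² + p·z² over ℚ is anisotropic, i.e., w² + x² + p·y² + p·z² = 0 with w, x, y, z ∈ ℚ implies w = x = y = z = 0. (This is the norm form of the quaternion algebra (−1, p) over ℚ, so this algebra is a division algebra.) -/
lemma aux_dvd (p : ℕ) (hp : p.Prime) (hmod : p % 4 = 3) (a b : ℤ)
    (h : (p : ℤ) ∣ a ^ 2 + b ^ 2) : (p : ℤ) ∣ a ∧ (p : ℤ) ∣ b := by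
  haveI : Fact p.Prime := ⟨hp⟩
  have hns : ¬ IsSquare (-1 : ZMod p) := by
    rw [ZMod.exists_sq_eq_neg_one_iff]
    simp [hmod]
  have hcast : ((a : ZMod p)) ^ 2 + ((b : ZMod p)) ^ 2 = 0 := by
    have := (ZMod.intCast_zmod_eq_zero_iff_dvd _ p).mpr h
    push_cast at this
    exact this
  have hA2 : (a : ZMod p) ^ 2 = -((b : ZMod p)) ^ 2 := by linear_combination hcast
  have hb0 : (b : ZMod p) = 0 := by
    by_contra hb
    apply hns
    refine ⟨(a : ZMod p) / (b : ZMod p), ?_⟩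
    rw [← sq, div_pow, hA2, neg_div, div_self (pow_ne_zero 2 hb)]
  have ha0 : (a : ZMod p) = 0 := by
    have : (a : ZMod p) ^ 2 = 0 := by rw [hA2, hb0]; ring
    exact pow_eq_zero_iff (by norm_num) |>.mp this
  exact ⟨(ZMod.intCast_zmod_eq_zero_iff_dvd a p).mp ha0,
    (ZMod.intCast_zmod_eq_zero_iff_dvd b p).mp hb0⟩

lemma aux_int (p : ℕ) (hp : p.Prime) (hmod : p % 4 = 3) :
    ∀ n : ℕ, ∀ a b c d : ℤ,
      a.natAbs + b.natAbs + c.natAbs + d.natAbs ≤ n →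
      a ^ 2 + b ^ 2 + (p : ℤ) * c ^ 2 + (p : ℤ) * d ^ 2 = 0 →
      a = 0 ∧ b = 0 ∧ c = 0 ∧ d = 0 := by
  intro n
  induction n with
  | zero =>
    intro a b c d hle _
    refine ⟨?_, ?_, ?_, ?_⟩ <;> (rw [← Int.natAbs_eq_zero]; omega)
  | succ n ih =>
    intro a b c d hle heq
    have hppos : 0 < (p : ℤ) := by exact_mod_cast hp.pos
    by_cases hab : a = 0 ∧ b = 0
    · obtain ⟨ha, hb⟩ := hab
      subst ha; subst hb
      have hc : c ^ 2 = 0 := by nlinarith [sq_nonneg c, sq_nonneg d]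
      have hd : d ^ 2 = 0 := by nlinarith [sq_nonneg c, sq_nonneg d]
      exact ⟨rfl, rfl, pow_eq_zero_iff (by norm_num) |>.mp hc,
        pow_eq_zero_iff (by norm_num) |>.mp hd⟩
    · have hdvdab : (p : ℤ) ∣ a ^ 2 + b ^ 2 := ⟨-(c ^ 2 + d ^ 2), by linarith⟩
      obtain ⟨hpa, hpb⟩ := aux_dvd p hp hmod a b hdvdab
      obtain ⟨a₁, rfl⟩ := hpa
      obtain ⟨b₁, rfl⟩ := hpb
      have heq2 : c ^ 2 + d ^ 2 + (p : ℤ) * a₁ ^ 2 + (p : ℤ) * b₁ ^ 2 = 0 := by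
        have : (p : ℤ) * (c ^ 2 + d ^ 2 + (p : ℤ) * a₁ ^ 2 + (p : ℤ) * b₁ ^ 2) = 0 := by
          ring_nf
          ring_nf at heq
          linarith
        exact (mul_eq_zero.mp this).resolve_left (by positivity)
      have hp2 : 2 ≤ p := hp.two_le
      have hna : ((p : ℤ) * a₁).natAbs = p * a₁.natAbs := by
        rw [Int.natAbs_mul, Int.natAbs_natCast]
      have hnb : ((p : ℤ) * b₁).natAbs = p * b₁.natAbs := by
        rw [Int.natAbs_mul, Int.natAbs_natCast]
      have hne : a₁ ≠ 0 ∨ b₁ ≠ 0 := by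
        by_contra hcon
        push_neg at hcon
        exact hab ⟨by rw [hcon.1, mul_zero], by rw [hcon.2, mul_zero]⟩
      rw [hna, hnb] at hle
      have ha' : a₁.natAbs ≤ p * a₁.natAbs := Nat.le_mul_of_pos_left _ hp.pos
      have hb' : b₁.natAbs ≤ p * b₁.natAbs := Nat.le_mul_of_pos_left _ hp.pos
      have hmeas : c.natAbs + d.natAbs + a₁.natAbs + b₁.natAbs ≤ n := by
        rcases hne with h1 | h1
        · have h0 : 0 < a₁.natAbs := Int.natAbs_pos.mpr h1
          have : a₁.natAbs < p * a₁.natAbs := by nlinarith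
          linarith
        · have h0 : 0 < b₁.natAbs := Int.natAbs_pos.mpr h1
          have : b₁.natAbs < p * b₁.natAbs := by nlinarith
          linarith
      obtain ⟨hc, hd, ha, hb⟩ := ih c d a₁ b₁ hmeas heq2
      exact ⟨by rw [ha, mul_zero], by rw [hb, mul_zero], hc, hd⟩

theorem stmt_1 (p : ℕ) (hp : p.Prime) (hmod : p % 4 = 3)
    (w x y z : ℚ)
    (h : w ^ 2 + x ^ 2 + (p : ℚ) * y ^ 2 + (p : ℚ) * z ^ 2 = 0) :
    w = 0 ∧ x = 0 ∧ y = 0 ∧ z = 0 := by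
  set A : ℤ := w.num * x.den * y.den * z.den with hA
  set B : ℤ := x.num * w.den * y.den * z.den with hB
  set C : ℤ := y.num * w.den * x.den * z.den with hC
  set D : ℤ := z.num * w.den * x.den * y.den with hD
  have hw : (w.num : ℚ) = w * w.den := by
    have hden : (w.den : ℚ) ≠ 0 := by
      exact_mod_cast w.den_nz
    exact (div_eq_iff hden).mp (Rat.num_div_den w)
  have hx : (x.num : ℚ) = x * x.den := by
    have hden : (x.den : ℚ) ≠ 0 := by
      exact_mod_cast x.den_nz
    exact (div_eq_iff hden).mp (Rat.num_div_den x)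
  have hy : (y.num : ℚ) = y * y.den := by
    have hden : (y.den : ℚ) ≠ 0 := by
      exact_mod_cast y.den_nz
    exact (div_eq_iff hden).mp (Rat.num_div_den y)
  have hz : (z.num : ℚ) = z * z.den := by
    have hden : (z.den : ℚ) ≠ 0 := by
      exact_mod_cast z.den_nz
    exact (div_eq_iff hden).mp (Rat.num_div_den z)
  have key : A ^ 2 + B ^ 2 + (p : ℤ) * C ^ 2 + (p : ℤ) * D ^ 2 = 0 := by
    have hq : (A : ℚ) ^ 2 + (B : ℚ) ^ 2 + (p : ℚ) * (C : ℚ) ^ 2 + (p : ℚ) * (D : ℚ) ^ 2 = 0 := by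
      push_cast [hA, hB, hC, hD]
      rw [hw, hx, hy, hz]
      ring_nf
      ring_nf at h
      nlinarith [h, sq_nonneg ((w.den : ℚ) * x.den * y.den * z.den)]
    exact_mod_cast hq
  obtain ⟨hA0, hB0, hC0, hD0⟩ :=
    aux_int p hp hmod (A.natAbs + B.natAbs + C.natAbs + D.natAbs) A B C D le_rfl key
  have hwden : (w.den : ℤ) ≠ 0 := by exact_mod_cast w.den_nz
  have hxden : (x.den : ℤ) ≠ 0 := by exact_mod_cast x.den_nz
  have hyden : (y.den : ℤ) ≠ 0 := by exact_mod_cast y.den_nz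
  have hzden : (z.den : ℤ) ≠ 0 := by exact_mod_cast z.den_nz
  refine ⟨?_, ?_, ?_, ?_⟩
  · have : w.num = 0 := by
      have := hA0
      rw [hA] at this
      simpa [hxden, hyden, hzden] using this
    exact Rat.zero_of_num_zero this
  · have : x.num = 0 := by
      have := hB0
      rw [hB] at this
      simpa [hwden, hyden, hzden] using this
    exact Rat.zero_of_num_zero this
  · have : y.num = 0 := by
      have := hC0
      rw [hC] at this
      simpa [hwden, hxden, hzden] using this
    exact Rat.zero_of_num_zero this
  · have : z.num = 0 := by
      have := hD0
      rw [hD] at this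
      simpa [hwden, hxden, hyden] using this
    exact Rat.zero_of_num_zero this
end

section
/- If p and q are distinct prime numbers, both congruent to 3 modulo 4, then the quaternion algebras (−1, p) and (−1, q) over ℚ are not isomorphic as ℚ-algebras. -/
/-!
An isomorphism `(-1, p) ≃ (-1, q)` pulls the generator `j` of `(-1, q)` back to an element of
`(-1, p)` squaring to `q`; since `q` is not a rational square, that element is a pure quaternion,
so `q = -y² + p z² + p w²` with `y z w : ℚ`. Descent at `p`, which cannot divide a sum of two
coprime squares, shows that `-q` is a square mod `p`; as `-1` is not, `q` is a non-residue mod `p`.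
Symmetrically `p` is a non-residue mod `q`, contradicting quadratic reciprocity for
`p ≡ q ≡ 3 (mod 4)`.
-/

open scoped Quaternion

namespace QuaternionAlgebra

variable {R : Type*} [Field R] [NeZero (2 : R)] {c₁ c₃ : R}

theorem re_eq_zero_of_mul_self_eq_coe {a : ℍ[R,c₁,c₃]} {r : R} (h : a * a = r)
    (hr : ¬IsSquare r) : a.re = 0 := by
  by_contra hre
  have h2re : 2 * a.re ≠ 0 := mul_ne_zero two_ne_zero hre
  have hI : 2 * a.re * a.imI = 0 := by
    have := congrArg imI h
    simp only [imI_mul, imI_coe] at this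
    linear_combination this
  have hJ : 2 * a.re * a.imJ = 0 := by
    have := congrArg imJ h
    simp only [imJ_mul, imJ_coe] at this
    linear_combination this
  have hK : 2 * a.re * a.imK = 0 := by
    have := congrArg imK h
    simp only [imK_mul, imK_coe] at this
    linear_combination this
  have hre_sq : a.re * a.re = r := by
    have := congrArg re h
    simp only [re_mul, re_coe, (mul_eq_zero.1 hI).resolve_left h2re,
      (mul_eq_zero.1 hJ).resolve_left h2re, (mul_eq_zero.1 hK).resolve_left h2re] at this
    linear_combination this
  exact hr ⟨a.re, hre_sq.symm⟩

theorem eq_of_mul_self_eq_coe {a : ℍ[R,c₁,c₃]} {r : R} (h : a * a = r) (hr : ¬IsSquare r) :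
    r = c₁ * a.imI ^ 2 + c₃ * a.imJ ^ 2 - c₁ * c₃ * a.imK ^ 2 := by
  have hre := re_eq_zero_of_mul_self_eq_coe h hr
  have := congrArg re h
  simp only [re_mul, re_coe, hre] at this
  linear_combination -this

theorem exists_eq_of_algHom {d₁ d₂ d₃ : R} (φ : ℍ[R,d₁,d₂,d₃] →ₐ[R] ℍ[R,c₁,c₃])
    (hd : ¬IsSquare d₃) : ∃ y z w : R, d₃ = c₁ * y ^ 2 + c₃ * z ^ 2 - c₁ * c₃ * w ^ 2 := by
  have hj : (⟨0, 0, 1, 0⟩ * ⟨0, 0, 1, 0⟩ : ℍ[R,d₁,d₂,d₃]) = d₃ := by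
    ext <;> simp
  have hφj : φ ⟨0, 0, 1, 0⟩ * φ ⟨0, 0, 1, 0⟩ = d₃ := by
    rw [← map_mul, hj, ← coe_algebraMap, AlgHom.commutes, coe_algebraMap]
  exact ⟨_, _, _, eq_of_mul_self_eq_coe hφj hd⟩

end QuaternionAlgebra

section SquaresModPrime

variable {p : ℕ} [Fact p.Prime]

theorem Int.dvd_of_dvd_sq_add_sq (hp : p % 4 = 3) {x y : ℤ} (h : (p : ℤ) ∣ x ^ 2 + y ^ 2) :
    (p : ℤ) ∣ x := by
  rw [← ZMod.intCast_zmod_eq_zero_iff_dvd] at h ⊢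
  push_cast at h
  by_contra hx
  exact ZMod.mod_four_ne_three_of_sq_eq_neg_sq hx (eq_neg_of_add_eq_zero_left h) hp

theorem ZMod.not_isSquare_of_isSquare_neg (hp : p % 4 = 3) {a : ZMod p} (ha : a ≠ 0)
    (h : IsSquare (-a)) : ¬IsSquare a := by
  rintro ⟨b, rfl⟩
  obtain ⟨c, hc⟩ := h
  refine ZMod.mod_four_ne_three_of_sq_eq_neg_sq' (x := c) (y := b) ?_ ?_ hp
  · rintro rfl
    simp at ha
  · rw [sq, sq, ← hc]

theorem ZMod.isSquare_neg_of_mul_sq_add_sq_eq (hp : p % 4 = 3) (q : ℤ) {N Y Z W : ℤ}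
    (hN : N ≠ 0) (h : q * N ^ 2 + Y ^ 2 = p * (Z ^ 2 + W ^ 2)) : IsSquare (-(q : ZMod p)) := by
  induction hn : N.natAbs using Nat.strong_induction_on generalizing N Y Z W with
  | _ n ih =>
  have hp0 : (p : ℤ) ≠ 0 := by exact_mod_cast (Fact.out : p.Prime).ne_zero
  by_cases hpN : (p : ℤ) ∣ N
  · obtain ⟨N, rfl⟩ := hpN
    obtain ⟨Y, rfl⟩ : (p : ℤ) ∣ Y :=
      Int.Prime.dvd_pow' (k := 2) Fact.out ⟨Z ^ 2 + W ^ 2 - q * p * N ^ 2, by linear_combination h⟩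
    have hZW : (p : ℤ) ∣ Z ^ 2 + W ^ 2 :=
      ⟨q * N ^ 2 + Y ^ 2, mul_left_cancel₀ hp0 (by linear_combination -h)⟩
    obtain ⟨W, rfl⟩ := Int.dvd_of_dvd_sq_add_sq hp (add_comm (Z ^ 2) _ ▸ hZW)
    obtain ⟨Z, rfl⟩ := Int.dvd_of_dvd_sq_add_sq hp hZW
    have hN : N ≠ 0 := right_ne_zero_of_mul hN
    refine ih N.natAbs ?_ (Y := Y) (Z := Z) (W := W) hN
      (mul_left_cancel₀ (pow_ne_zero 2 hp0) ?_) rfl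
    · rw [← hn, Int.natAbs_mul, Int.natAbs_natCast]
      exact lt_mul_left (Int.natAbs_pos.2 hN) (Fact.out : p.Prime).one_lt
    · linear_combination h
  · have hN : (N : ZMod p) ≠ 0 := mt (ZMod.intCast_zmod_eq_zero_iff_dvd _ _).1 hpN
    have hmod := congrArg (Int.cast : ℤ → ZMod p) h
    push_cast [ZMod.natCast_self] at hmod
    exact ⟨Y / N, by field_simp; linear_combination -hmod⟩

theorem ZMod.isSquare_neg_of_add_sq_eq (hp : p % 4 = 3) (q : ℤ) {y z w : ℚ}
    (h : q + y ^ 2 = p * (z ^ 2 + w ^ 2)) : IsSquare (-(q : ZMod p)) := by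
  refine ZMod.isSquare_neg_of_mul_sq_add_sq_eq hp q (N := y.den * z.den * w.den)
    (Y := y.num * z.den * w.den) (Z := y.den * z.num * w.den) (W := y.den * z.den * w.num)
    (by positivity) (Int.cast_injective (α := ℚ) ?_)
  push_cast
  simp only [← Rat.mul_den_eq_num]
  linear_combination ((y.den : ℚ) * z.den * w.den) ^ 2 * h

end SquaresModPrime

theorem not_isSquare_of_algHom {p q : ℕ} [Fact p.Prime] [Fact q.Prime] (hpq : p ≠ q)
    (hp : p % 4 = 3) (φ : ℍ[ℚ,-1,(q : ℚ)] →ₐ[ℚ] ℍ[ℚ,-1,(p : ℚ)]) : ¬IsSquare (q : ZMod p) := by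
  have hq : ¬IsSquare (q : ℚ) := by
    rw [Rat.isSquare_natCast_iff]
    exact (Nat.prime_iff.1 Fact.out).not_isSquare
  obtain ⟨y, z, w, h⟩ := QuaternionAlgebra.exists_eq_of_algHom φ hq
  refine ZMod.not_isSquare_of_isSquare_neg hp (ZMod.prime_ne_zero p q hpq) ?_
  have := ZMod.isSquare_neg_of_add_sq_eq hp q (y := y) (z := z) (w := w)
    (by push_cast; linear_combination h)
  simpa using this

theorem stmt_2 (p q : ℕ) (hp : p.Prime) (hq : q.Prime) (hne : p ≠ q)
    (hpmod : p % 4 = 3) (hqmod : q % 4 = 3) :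
    IsEmpty (QuaternionAlgebra ℚ (-1) 0 (p : ℚ) ≃ₐ[ℚ] QuaternionAlgebra ℚ (-1) 0 (q : ℚ)) := by
  have := Fact.mk hp
  have := Fact.mk hq
  refine ⟨fun φ => ?_⟩
  have hqp := not_isSquare_of_algHom hne hpmod φ.symm.toAlgHom
  have hpq := not_isSquare_of_algHom hne.symm hqmod φ.toAlgHom
  exact hqp ((ZMod.exists_sq_eq_prime_iff_of_mod_four_eq_three hpmod hqmod hne).2 hpq)
end

section
/- Let n ≥ 3, l ≥ 0, and m ≥ l + 3 be integers. If Σ¹_odd(m, n, l) > Σ²_odd(m, n, l), then Σ¹_odd(m−1, n, l) > Σ²_odd(m−1, n, l). -/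
def Sigma1Even (m n l : ℕ) : ℕ :=
  ∑ r ∈ Finset.range (l / 2 + 1),
    (Nat.choose l (2 * r) * 2 ^ (2 * r + 1) * (n - 2) ^ (m - (2 * r + 1)) +
      Nat.choose l (2 * r + 1) * 2 ^ (m - l + (2 * r + 1)) * (n - 2) ^ (l - (2 * r + 1)))

def Sigma2Even (m n l : ℕ) : ℕ :=
  ∑ r ∈ Finset.range (l / 2 + 1),
    (Nat.choose l (2 * r) * 2 ^ (2 * r + 2) * (n - 2) ^ (m - (2 * r + 2)) +
      Nat.choose l (2 * r + 1) * 2 ^ (2 * r + 1) * (n - 2) ^ (m - (2 * r + 2)))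

def Sigma1Odd (m n l : ℕ) : ℕ :=
  ∑ r ∈ Finset.range (l / 2 + 1),
    (Nat.choose l (2 * r) * (n - 2) ^ (m - (2 * r + 1)) +
      Nat.choose l (2 * r + 1) * (n - 2) ^ (l - (2 * r + 1)))

def Sigma2Odd (m n l : ℕ) : ℕ :=
  ∑ r ∈ Finset.range (l / 2 + 1),
    (Nat.choose l (2 * r) * (n - 2) ^ (m - (2 * r + 2)) +
      Nat.choose l (2 * r + 1) * (n - 2) ^ (m - (2 * r + 2)))

theorem stmt_12 (m n l : ℕ) (hn : 3 ≤ n) (hm : l + 3 ≤ m)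
    (h : Sigma1Odd m n l > Sigma2Odd m n l) :
    Sigma1Odd (m - 1) n l > Sigma2Odd (m - 1) n l := by
  obtain ⟨d, hd⟩ : ∃ d, n - 2 = d + 1 := ⟨n - 3, by omega⟩
  set A := ∑ r ∈ Finset.range (l / 2 + 1),
      Nat.choose l (2 * r + 1) * (n - 2) ^ (l - (2 * r + 1)) with hA
  have h1 : (d + 1) * Sigma1Odd (m - 1) n l = Sigma1Odd m n l + d * A := by
    simp only [Sigma1Odd, hA, Finset.mul_sum, ← Finset.sum_add_distrib]
    refine Finset.sum_congr rfl fun r hr => ?_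
    have e1 : m - (2 * r + 1) = (m - 1 - (2 * r + 1)) + 1 := by
      have := Finset.mem_range.mp hr
      have : 2 * r ≤ l := by omega
      omega
    rw [e1, pow_succ, hd]
    ring
  have h2 : (d + 1) * Sigma2Odd (m - 1) n l = Sigma2Odd m n l := by
    simp only [Sigma2Odd, Finset.mul_sum]
    refine Finset.sum_congr rfl fun r hr => ?_
    have e1 : m - (2 * r + 2) = (m - 1 - (2 * r + 2)) + 1 := by
      have := Finset.mem_range.mp hr
      have : 2 * r ≤ l := by omega
      omega
    rw [e1, pow_succ, hd]
    ring
  have key : (d + 1) * Sigma2Odd (m - 1) n l < (d + 1) * Sigma1Odd (m - 1) n l := by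
    omega
  exact lt_of_mul_lt_mul_left key (Nat.zero_le _)
end

section
/- Let n ≥ 3, l ≥ 0, and m ≥ l + 3 be integers. If Σ¹_even(m, n, l) > Σ²_even(m, n, l), then Σ¹_even(m−1, n, l) > Σ²_even(m−1, n, l). -/
open Finset

lemma pair_sum {M : Type*} [AddCommMonoid M] (l : ℕ) (f : ℕ → M)
    (hf : f (l + 1) = 0) :
    ∑ r ∈ range (l / 2 + 1), (f (2 * r) + f (2 * r + 1)) = ∑ j ∈ range (l + 1), f j := by
  have key : ∀ k : ℕ, ∑ r ∈ range k, (f (2 * r) + f (2 * r + 1)) = ∑ j ∈ range (2 * k), f j := by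
    intro k
    induction k with
    | zero => simp
    | succ k ih =>
      rw [sum_range_succ, ih, Nat.mul_succ, show 2*k+2 = (2*k+1)+1 from rfl,
        sum_range_succ, sum_range_succ, add_assoc]
  rcases Nat.even_or_odd l with ⟨t, ht⟩ | ⟨t, ht⟩
  · have hl : l = 2 * t := by omega
    subst hl
    have h2 : 2 * t / 2 = t := by omega
    rw [h2, key, Nat.mul_succ, show 2*t+2 = (2*t+1)+1 from rfl, sum_range_succ, hf, add_zero]
  · have hl : l = 2 * t + 1 := by omega
    subst hl
    have h2 : (2 * t + 1) / 2 = t := by omega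
    rw [h2, key, Nat.mul_succ]

def auxE (l : ℕ) : ℕ := ∑ r ∈ range (l / 2 + 1), Nat.choose l (2 * r) * 2 ^ (2 * r)
def auxD (l : ℕ) : ℕ := ∑ r ∈ range (l / 2 + 1), Nat.choose l (2 * r + 1) * 2 ^ (2 * r + 1)

lemma auxED_sum (l : ℕ) : auxE l + auxD l = 3 ^ l := by
  have h := pair_sum l (fun j => Nat.choose l j * 2 ^ j) (by
    simp [Nat.choose_eq_zero_of_lt])
  rw [auxE, auxD, ← sum_add_distrib, h, show (3:ℕ) = 2 + 1 from rfl, add_pow]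
  simp [mul_comm]

lemma auxED_diff (l : ℕ) : (auxE l : ℤ) - auxD l = (-1) ^ l := by
  have h := pair_sum l (fun j => (Nat.choose l j : ℤ) * (-2) ^ j) (by
    simp [Nat.choose_eq_zero_of_lt])
  have h2 : ∀ r : ℕ, (Nat.choose l (2*r) : ℤ) * (-2) ^ (2*r) +
      (Nat.choose l (2*r+1) : ℤ) * (-2) ^ (2*r+1)
      = (Nat.choose l (2*r) : ℤ) * 2 ^ (2*r) - (Nat.choose l (2*r+1) : ℤ) * 2 ^ (2*r+1) := by
    intro r
    have : (-2:ℤ) ^ (2*r) = 2 ^ (2*r) := by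
      rw [show (-2:ℤ) = -1 * 2 by ring, mul_pow, pow_mul]; simp
    rw [pow_succ, this]; ring
  rw [sum_congr rfl (fun r _ => h2 r)] at h
  rw [sum_sub_distrib] at h
  have : (auxE l : ℤ) - auxD l = ∑ j ∈ range (l+1), (Nat.choose l j : ℤ) * (-2) ^ j := by
    rw [← h, auxE, auxD]; push_cast; ring
  rw [this, show (-1:ℤ) = -2 + 1 by ring, add_pow]
  simp [mul_comm]

lemma key3 (l : ℕ) (hl : 1 ≤ l) : 2 * auxE l < 3 * auxD l := by
  have hs := auxED_sum l
  have hd := auxED_diff l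
  rcases Nat.even_or_odd l with he | ho
  · obtain ⟨t, ht⟩ := he
    have h2 : 2 ≤ l := by omega
    have h9 : (9:ℤ) ≤ 3 ^ l := by
      calc (9:ℤ) = 3 ^ 2 := by norm_num
      _ ≤ 3 ^ l := pow_le_pow_right₀ (by norm_num) h2
    rw [Even.neg_one_pow ⟨t, ht⟩] at hd
    have hs' : (auxE l : ℤ) + auxD l = 3 ^ l := by exact_mod_cast hs
    have : (2:ℤ) * auxE l < 3 * auxD l := by linarith
    exact_mod_cast this
  · rw [ho.neg_one_pow] at hd
    have : (2:ℤ) * auxE l < 3 * auxD l := by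
      have hD : (0:ℤ) ≤ auxD l := Int.natCast_nonneg _
      linarith
    exact_mod_cast this

lemma s1_three (m l : ℕ) : Sigma1Even m 3 l = 2 * auxE l + 2 ^ (m - l) * auxD l := by
  rw [Sigma1Even, auxE, auxD, mul_sum, mul_sum, ← sum_add_distrib]
  apply sum_congr rfl
  intro r _
  rw [show (3:ℕ) - 2 = 1 from rfl]
  simp only [one_pow, mul_one]
  ring

lemma s2_three (m l : ℕ) : Sigma2Even m 3 l = 4 * auxE l + auxD l := by
  rw [Sigma2Even, auxE, auxD, mul_sum, ← sum_add_distrib]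
  apply sum_congr rfl
  intro r _
  rw [show (3:ℕ) - 2 = 1 from rfl]
  simp only [one_pow, mul_one]
  ring

theorem stmt_13 (m n l : ℕ) (hn : 3 ≤ n) (hm : l + 3 ≤ m)
    (h : Sigma1Even m n l > Sigma2Even m n l) :
    Sigma1Even (m - 1) n l > Sigma2Even (m - 1) n l := by
  rcases eq_or_lt_of_le hn with rfl | hn4
  · -- n = 3 case
    rcases Nat.eq_zero_or_pos l with rfl | hl1
    · exfalso
      rw [s1_three, s2_three] at h
      simp [auxE, auxD] at h
    · rw [s1_three, s2_three] at h ⊢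
      have hk := key3 l hl1
      have h4 : 4 ≤ 2 ^ (m - 1 - l) := by
        calc (4:ℕ) = 2 ^ 2 := rfl
        _ ≤ 2 ^ (m - 1 - l) := Nat.pow_le_pow_right (by norm_num) (by omega)
      have h5 : 4 * auxD l ≤ 2 ^ (m - 1 - l) * auxD l := Nat.mul_le_mul_right _ h4
      omega
  · -- n ≥ 4 case
    have hk : 2 ≤ n - 2 := by omega
    have h2 : Sigma2Even m n l = (n - 2) * Sigma2Even (m - 1) n l := by
      rw [Sigma2Even, Sigma2Even, mul_sum]
      apply sum_congr rfl
      intro r hr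
      have hr' : 2 * r ≤ l := by
        have := mem_range.mp hr
        omega
      have e1 : m - (2 * r + 2) = (m - 1 - (2 * r + 2)) + 1 := by omega
      rw [e1]
      ring
    have h1 : Sigma1Even m n l ≤ (n - 2) * Sigma1Even (m - 1) n l := by
      rw [Sigma1Even, Sigma1Even, mul_sum]
      apply sum_le_sum
      intro r hr
      have hr' : 2 * r ≤ l := by
        have := mem_range.mp hr
        omega
      have e1 : m - (2 * r + 1) = (m - 1 - (2 * r + 1)) + 1 := by omega
      have e2 : m - l + (2 * r + 1) = (m - 1 - l + (2 * r + 1)) + 1 := by omega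
      have key : Nat.choose l (2 * r) * 2 ^ (2 * r + 1) * (n - 2) ^ (m - (2 * r + 1)) +
          Nat.choose l (2 * r + 1) * 2 ^ (m - l + (2 * r + 1)) * (n - 2) ^ (l - (2 * r + 1))
          = Nat.choose l (2 * r) * 2 ^ (2 * r + 1) * (n - 2) ^ (m - 1 - (2 * r + 1)) * (n - 2)
            + 2 * (Nat.choose l (2 * r + 1) * 2 ^ (m - 1 - l + (2 * r + 1)) *
              (n - 2) ^ (l - (2 * r + 1))) := by
        rw [e1, e2]
        ring
      rw [key, mul_add]
      apply Nat.add_le_add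
      · apply le_of_eq
        ring
      · calc 2 * (Nat.choose l (2 * r + 1) * 2 ^ (m - 1 - l + (2 * r + 1)) *
              (n - 2) ^ (l - (2 * r + 1)))
            ≤ (n - 2) * (Nat.choose l (2 * r + 1) * 2 ^ (m - 1 - l + (2 * r + 1)) *
              (n - 2) ^ (l - (2 * r + 1))) := Nat.mul_le_mul_right _ hk
          _ = _ := rfl
    have hlt : (n - 2) * Sigma2Even (m - 1) n l < (n - 2) * Sigma1Even (m - 1) n l := by
      rw [← h2]
      exact lt_of_lt_of_le h h1
    exact Nat.lt_of_mul_lt_mul_left hlt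
end

section
/- Let m, n, l be integers with l ≥ 0, m ≥ l + 2, and n − 2 > 2^l. Then Σ¹_odd(m, n, l) > Σ²_odd(m, n, l). In particular, the extra condition of Theorem 2.8(iv′) in the odd case holds whenever n − 2 > 2^{m−3} (taking all 2 ≤ l ≤ m − 3). -/
/-! The leading term of `Sigma1Odd` alone beats `Sigma2Odd`: every term of `Sigma2Odd` carries a
power of `n - 2` of exponent at most `m - 2`, and its binomial coefficients add up to `2 ^ l`, so
`Sigma2Odd ≤ 2 ^ l * (n - 2) ^ (m - 2) < (n - 2) ^ (m - 1) ≤ Sigma1Odd`. -/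

theorem Finset.sum_range_two_mul_eq_sum_pairs {M : Type*} [AddCommMonoid M] (f : ℕ → M) (k : ℕ) :
    ∑ i ∈ range (2 * k), f i = ∑ r ∈ range k, (f (2 * r) + f (2 * r + 1)) := by
  induction k with
  | zero => simp
  | succ k ih =>
    rw [Nat.mul_succ, sum_range_succ, sum_range_succ, sum_range_succ, ih, add_assoc]

theorem Nat.sum_range_choose_even_add_odd (l : ℕ) :
    ∑ r ∈ Finset.range (l / 2 + 1), (l.choose (2 * r) + l.choose (2 * r + 1)) = 2 ^ l := by
  rw [← Finset.sum_range_two_mul_eq_sum_pairs, ← Nat.sum_range_choose]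
  refine (Finset.sum_subset (Finset.range_subset_range.2 (by omega)) fun i _ hi => ?_).symm
  exact Nat.choose_eq_zero_of_lt (by simpa using hi)

theorem pow_sub_one_le_sigma1Odd (m n l : ℕ) : (n - 2) ^ (m - 1) ≤ Sigma1Odd m n l := by
  have hlead := Finset.single_le_sum (s := Finset.range (l / 2 + 1)) (a := 0)
    (f := fun r => l.choose (2 * r) * (n - 2) ^ (m - (2 * r + 1)) +
      l.choose (2 * r + 1) * (n - 2) ^ (l - (2 * r + 1)))
    (fun _ _ => Nat.zero_le _) (by simp)
  simp only [mul_zero, Nat.choose_zero_right, one_mul, zero_add] at hlead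
  exact le_of_add_le_left hlead

theorem sigma2Odd_le (m n l : ℕ) (hn : 0 < n - 2) :
    Sigma2Odd m n l ≤ 2 ^ l * (n - 2) ^ (m - 2) := by
  rw [← Nat.sum_range_choose_even_add_odd, Finset.sum_mul]
  refine Finset.sum_le_sum fun r _ => ?_
  rw [add_mul]
  have hpow : (n - 2) ^ (m - (2 * r + 2)) ≤ (n - 2) ^ (m - 2) := Nat.pow_le_pow_right hn (by omega)
  exact add_le_add (Nat.mul_le_mul_left _ hpow) (Nat.mul_le_mul_left _ hpow)

theorem stmt_15 (m n l : ℕ) (hm : l + 2 ≤ m) (hn : 2 ^ l < n - 2) :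
    Sigma1Odd m n l > Sigma2Odd m n l := by
  have hbase : 0 < n - 2 := Nat.zero_lt_of_lt hn
  have hexp : m - 1 = m - 2 + 1 := by omega
  calc Sigma2Odd m n l ≤ 2 ^ l * (n - 2) ^ (m - 2) := sigma2Odd_le m n l hbase
    _ < (n - 2) * (n - 2) ^ (m - 2) := Nat.mul_lt_mul_of_pos_right hn (pow_pos hbase _)
    _ = (n - 2) ^ (m - 1) := by rw [hexp, pow_succ']
    _ ≤ Sigma1Odd m n l := pow_sub_one_le_sigma1Odd m n l
end

section
/- Let m, n, l be integers with l ≥ 0, m ≥ l + 2, and n − 2 > 2·3^l. Then Σ¹_even(m, n, l) > Σ²_even(m, n, l). -/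
/-!
Write `d = n - 2`. The `r = 0` term of `Sigma1Even m n l` alone is at least `2 d ^ (m - 1)`.
The `r`-th summand of `Sigma2Even m n l` is at most
`4 (C(l, 2r) 2 ^ 2r + C(l, 2r+1) 2 ^ (2r+1)) d ^ (m - 2)`, and by the binomial theorem these
bounds add up to `4 · 3 ^ l · d ^ (m - 2)`. Hence `2 · 3 ^ l < d` gives the strict inequality.
-/

theorem Finset.sum_range_pairs_eq_sum_range_two_mul {M : Type*} [AddCommMonoid M]
    (f : ℕ → M) (k : ℕ) :
    ∑ r ∈ range k, (f (2 * r) + f (2 * r + 1)) = ∑ j ∈ range (2 * k), f j := by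
  induction k with
  | zero => simp
  | succ k ih =>
    rw [sum_range_succ, ih, Nat.mul_succ, sum_range_succ, sum_range_succ, add_assoc]

theorem sum_choose_even_odd_mul_pow {R : Type*} [CommSemiring R] (x : R) (l : ℕ) :
    ∑ r ∈ Finset.range (l / 2 + 1),
      (l.choose (2 * r) * x ^ (2 * r) + l.choose (2 * r + 1) * x ^ (2 * r + 1)) =
      (x + 1) ^ l := by
  rw [Finset.sum_range_pairs_eq_sum_range_two_mul (fun j ↦ l.choose j * x ^ j), add_pow]
  have hsub : Finset.range (l + 1) ⊆ Finset.range (2 * (l / 2 + 1)) :=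
    Finset.range_subset_range.2 (by omega)
  rw [← Finset.sum_subset hsub fun j _ hj ↦ by
    rw [Nat.choose_eq_zero_of_lt (by simpa using hj), Nat.cast_zero, zero_mul]]
  exact Finset.sum_congr rfl fun j _ ↦ by rw [one_pow, mul_one, mul_comm]

theorem two_mul_pow_le_sigma1Even (m n l : ℕ) : 2 * (n - 2) ^ (m - 1) ≤ Sigma1Even m n l := by
  unfold Sigma1Even
  refine le_trans ?_ (Finset.single_le_sum (fun _ _ ↦ Nat.zero_le _)
    (Finset.mem_range.2 (Nat.succ_pos (l / 2))))
  simp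

theorem sigma2Even_le (m n l : ℕ) (hn : 1 ≤ n - 2) :
    Sigma2Even m n l ≤ 4 * 3 ^ l * (n - 2) ^ (m - 2) := by
  calc Sigma2Even m n l
      ≤ ∑ r ∈ Finset.range (l / 2 + 1),
          4 * (l.choose (2 * r) * 2 ^ (2 * r) + l.choose (2 * r + 1) * 2 ^ (2 * r + 1)) *
            (n - 2) ^ (m - 2) := by
        refine Finset.sum_le_sum fun r _ ↦ ?_
        have hpow : (n - 2) ^ (m - (2 * r + 2)) ≤ (n - 2) ^ (m - 2) :=
          Nat.pow_le_pow_right hn (by omega)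
        have hcoeff : l.choose (2 * r) * 2 ^ (2 * r + 2) + l.choose (2 * r + 1) * 2 ^ (2 * r + 1)
            ≤ 4 * (l.choose (2 * r) * 2 ^ (2 * r) + l.choose (2 * r + 1) * 2 ^ (2 * r + 1)) := by
          rw [pow_add 2 (2 * r) 2]; nlinarith [Nat.zero_le (l.choose (2 * r + 1) * 2 ^ (2 * r + 1))]
        calc _ = (l.choose (2 * r) * 2 ^ (2 * r + 2) + l.choose (2 * r + 1) * 2 ^ (2 * r + 1)) *
              (n - 2) ^ (m - (2 * r + 2)) := by ring
          _ ≤ _ := Nat.mul_le_mul hcoeff hpow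
    _ = 4 * 3 ^ l * (n - 2) ^ (m - 2) := by
        rw [← Finset.sum_mul, ← Finset.mul_sum]
        simpa using congrArg (4 * · * (n - 2) ^ (m - 2)) (sum_choose_even_odd_mul_pow 2 l)

theorem stmt_16 (m n l : ℕ) (hm : l + 2 ≤ m) (hn : 2 * 3 ^ l < n - 2) :
    Sigma1Even m n l > Sigma2Even m n l := by
  have hpos : 0 < (n - 2) ^ (m - 2) := pow_pos (by omega) _
  calc Sigma2Even m n l
      ≤ 4 * 3 ^ l * (n - 2) ^ (m - 2) := sigma2Even_le m n l (by omega)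
    _ < 2 * (n - 2) * (n - 2) ^ (m - 2) := Nat.mul_lt_mul_of_pos_right (by omega) hpos
    _ = 2 * (n - 2) ^ (m - 1) := by rw [show m - 1 = m - 2 + 1 by omega, pow_succ]; ring
    _ ≤ Sigma1Even m n l := two_mul_pow_le_sigma1Even m n l
end
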